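/- Let m ≥ 2 be even, n divisible by m/2, N = 2n/m, and let k be an integer with 2 ≤ k ≤ N/2. The Pareto front F of m-OJZJ_k equals the set of all vectors v ∈ ℕ^m such that for every j ∈ {1, …, m/2} one has v_{2j−1} ∈ {k} ∪ {2k, 2k+1, …, N} ∪ {N+k} and v_{2j} = 2k + N − v_{2j−1}. -/

import Mathlib

/-- Number of one-bits of a block `b ∈ {0,1}^N`. -/
def ones {N : ℕ} (b : Fin N → Bool) : ℕ :=
  (Finset.univ.filter fun i => b i = true).card

/-- Number of zero-bits of a block `b ∈ {0,1}^N`. -/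
def zeros {N : ℕ} (b : Fin N → Bool) : ℕ :=
  (Finset.univ.filter fun i => b i = false).card

/-- A search point in `{0,1}^n` with `n = M * N`, presented as `M` blocks of length `N`. -/
abbrev Point (M N : ℕ) := Fin M → Fin N → Bool

/-- The `m`-objective function `m`-OJZJ_k with `m = 2 * M` objectives (0-indexed:
objective `i` corresponds to the 1-indexed objective `i+1`, so even `i` is the
"ones" objective and odd `i` the "zeros" objective of block `i / 2`). -/
def mOJZJ (N k : ℕ) {M : ℕ} (x : Point M N) (i : Fin (2 * M)) : ℕ :=
  let b := x ⟨i.val / 2, by have := i.isLt; omega⟩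
  if i.val % 2 = 0 then
    if ones b ≤ N - k ∨ ones b = N then k + ones b else N - ones b
  else
    if zeros b ≤ N - k ∨ zeros b = N then k + zeros b else N - zeros b

/-- `x` weakly dominates `y`. -/
def weaklyDom (N k : ℕ) {M : ℕ} (x y : Point M N) : Prop :=
  ∀ i, mOJZJ N k y i ≤ mOJZJ N k x i

/-- `x` dominates `y`. -/
def dom (N k : ℕ) {M : ℕ} (x y : Point M N) : Prop :=
  weaklyDom N k x y ∧ ∃ i, mOJZJ N k y i < mOJZJ N k x i

/-- `x` is Pareto-optimal: no search point dominates it. -/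
def paretoOptimal (N k : ℕ) {M : ℕ} (x : Point M N) : Prop :=
  ¬ ∃ y : Point M N, dom N k y x

/-- The Pareto front: the set of fitness vectors of Pareto-optimal search points. -/
def paretoFront (N k M : ℕ) : Set (Fin (2 * M) → ℕ) :=
  {v | ∃ x : Point M N, paretoOptimal N k x ∧ mOJZJ N k x = v}

/-!
Write `o` for the number of one-bits of a block. The block contributes the pair
`(jump o, jump (N - o))` to the fitness vector, and `jump o ≤ k + o`, so the pair sums to at
most `2k + N`, with equality exactly when `o` avoids the gaps `(0, k)` and `(N - k, N)`.
A block in a gap is strictly dominated by the all-zeros or the all-ones block, while a block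
attaining the sum `2k + N` cannot be dominated at all. Since the blocks are independent,
`x` is Pareto-optimal iff each of its blocks avoids the gaps.
-/

def jump (N k o : ℕ) : ℕ := if o ≤ N - k ∨ o = N then k + o else N - o

def blockFitness (N k o : ℕ) : ℕ × ℕ := (jump N k o, jump N k (N - o))

def IsOptimalCount (N k o : ℕ) : Prop := o = 0 ∨ (k ≤ o ∧ o + k ≤ N) ∨ o = N

section BlockFitness

variable {N k o : ℕ}

lemma jump_le : jump N k o ≤ k + o := by
  unfold jump; split_ifs <;> omega

lemma jump_zero : jump N k 0 = k := by
  simp [jump]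

lemma jump_self : jump N k N = k + N := by
  simp [jump]

lemma jump_of_lt (h₁ : N - k < o) (h₂ : o < N) : jump N k o = N - o := by
  rw [jump, if_neg (by omega)]

lemma blockFitness_of_isOptimalCount (ho : o ≤ N) (h : IsOptimalCount N k o) :
    blockFitness N k o = (k + o, k + (N - o)) := by
  unfold IsOptimalCount at h
  simp only [blockFitness, jump, Prod.mk.injEq]
  constructor <;> split_ifs <;> omega

lemma blockFitness_lt_of_not_isOptimalCount (ho : o ≤ N) (h : ¬ IsOptimalCount N k o) :
    blockFitness N k o < blockFitness N k 0 ∨ blockFitness N k o < blockFitness N k N := by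
  unfold IsOptimalCount at h
  have h₁ : jump N k o ≤ k + o := jump_le
  have h₂ : jump N k (N - o) ≤ k + (N - o) := jump_le
  simp only [blockFitness, Nat.sub_zero, Nat.sub_self, jump_zero, jump_self, Prod.lt_iff]
  by_cases hk : o < k
  · rw [jump_of_lt (o := N - o) (by omega) (by omega)]
    omega
  · rw [jump_of_lt (o := o) (by omega) (by omega)]
    omega

lemma isOptimalCount_iff_forall_not_lt (ho : o ≤ N) :
    IsOptimalCount N k o ↔ ∀ o' ≤ N, ¬ blockFitness N k o < blockFitness N k o' := by
  refine ⟨fun h o' ho' hlt => ?_, fun h => ?_⟩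
  · -- a strict improvement would push the sum of the pair above its maximum `2k + N`
    have h₁ : jump N k o' ≤ k + o' := jump_le
    have h₂ : jump N k (N - o') ≤ k + (N - o') := jump_le
    rw [blockFitness_of_isOptimalCount ho h, blockFitness, Prod.lt_iff] at hlt
    omega
  · by_contra hopt
    rcases blockFitness_lt_of_not_isOptimalCount ho hopt with hlt | hlt
    exacts [h 0 (Nat.zero_le N) hlt, h N le_rfl hlt]

end BlockFitness

lemma forall_fin_two_mul_iff {M : ℕ} {P : Fin (2 * M) → Prop} :
    (∀ i, P i) ↔ ∀ j : Fin M, P ⟨2 * j, by omega⟩ ∧ P ⟨2 * j + 1, by omega⟩ := by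
  refine ⟨fun h j => ⟨h _, h _⟩, fun h i => ?_⟩
  rcases Nat.even_or_odd' i.val with ⟨j, hj | hj⟩
  · convert (h ⟨j, by omega⟩).1
  · convert (h ⟨j, by omega⟩).2

lemma exists_fin_two_mul_iff {M : ℕ} {P : Fin (2 * M) → Prop} :
    (∃ i, P i) ↔ ∃ j : Fin M, P ⟨2 * j, by omega⟩ ∨ P ⟨2 * j + 1, by omega⟩ := by
  simpa only [not_forall, not_and_or, not_not] using
    (forall_fin_two_mul_iff (P := fun i => ¬ P i)).not

section Blocks

variable {N : ℕ}

lemma ones_le (b : Fin N → Bool) : ones b ≤ N :=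
  (Finset.card_filter_le _ _).trans_eq (Finset.card_fin N)

lemma zeros_eq_sub_ones (b : Fin N → Bool) : zeros b = N - ones b := by
  have h := Finset.card_filter_add_card_filter_not (s := Finset.univ) (fun i => b i = true)
  simp only [Bool.not_eq_true, Finset.card_univ, Fintype.card_fin] at h
  unfold ones zeros
  omega

lemma exists_ones_eq {o : ℕ} (h : o ≤ N) : ∃ b : Fin N → Bool, ones b = o :=
  ⟨fun i => decide (i.val < o), by simp [ones, Fin.card_filter_val_lt, h]⟩

end Blocks

section Dominance

variable {N k M : ℕ}

lemma mOJZJ_two_mul (x : Point M N) (j : Fin M) :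
    mOJZJ N k x ⟨2 * j, by omega⟩ = (blockFitness N k (ones (x j))).1 := by
  simp [mOJZJ, blockFitness, jump]

lemma mOJZJ_two_mul_add_one (x : Point M N) (j : Fin M) :
    mOJZJ N k x ⟨2 * j + 1, by omega⟩ = (blockFitness N k (ones (x j))).2 := by
  have hj : (⟨(2 * j + 1) / 2, by omega⟩ : Fin M) = j := Fin.ext (by simp; omega)
  simp [mOJZJ, blockFitness, jump, hj, zeros_eq_sub_ones]

lemma weaklyDom_iff {x y : Point M N} :
    weaklyDom N k y x ↔ ∀ j, blockFitness N k (ones (x j)) ≤ blockFitness N k (ones (y j)) := by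
  simp only [weaklyDom, forall_fin_two_mul_iff, mOJZJ_two_mul, mOJZJ_two_mul_add_one,
    Prod.le_def]

lemma dom_iff {x y : Point M N} :
    dom N k y x ↔ (∀ j, blockFitness N k (ones (x j)) ≤ blockFitness N k (ones (y j))) ∧
      ∃ j, blockFitness N k (ones (x j)) < blockFitness N k (ones (y j)) := by
  rw [dom, weaklyDom_iff, exists_fin_two_mul_iff]
  simp only [mOJZJ_two_mul, mOJZJ_two_mul_add_one]
  refine and_congr_right fun hle => exists_congr fun j => ?_
  have := Prod.le_def.mp (hle j)
  rw [Prod.lt_iff]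
  omega

lemma paretoOptimal_iff {x : Point M N} :
    paretoOptimal N k x ↔ ∀ j, IsOptimalCount N k (ones (x j)) := by
  simp only [isOptimalCount_iff_forall_not_lt (ones_le _)]
  refine ⟨fun hx j o ho hlt => hx ?_, fun h ⟨y, hy⟩ => ?_⟩
  · obtain ⟨b, hb⟩ := exists_ones_eq ho
    refine ⟨Function.update x j b, dom_iff.2 ⟨fun j' => ?_, j, by simpa [hb] using hlt⟩⟩
    rcases eq_or_ne j' j with rfl | hj
    · simpa [hb] using hlt.le
    · simp [hj]
  · obtain ⟨-, j, hj⟩ := dom_iff.1 hy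
    exact h j _ (ones_le _) hj

end Dominance

/-- the Pareto front of `m`-OJZJ_k is exactly the set of vectors `v` with
`v_{2j-1} ∈ {k} ∪ {2k, …, N} ∪ {N+k}` and `v_{2j} = 2k + N − v_{2j-1}` for every block `j`
(with 0-indexing, `v_{2j-1}` is `v (2j)` and `v_{2j}` is `v (2j+1)`). -/
theorem pareto_front_eq (m N k : ℕ) :
    paretoFront N k (m / 2) =
      {v : Fin (2 * (m / 2)) → ℕ |
        ∀ j : Fin (m / 2),
          (v ⟨2 * j.val, by have := j.isLt; omega⟩ = k ∨
            (2 * k ≤ v ⟨2 * j.val, by have := j.isLt; omega⟩ ∧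
              v ⟨2 * j.val, by have := j.isLt; omega⟩ ≤ N) ∨
            v ⟨2 * j.val, by have := j.isLt; omega⟩ = N + k) ∧
          v ⟨2 * j.val + 1, by have := j.isLt; omega⟩ =
            2 * k + N - v ⟨2 * j.val, by have := j.isLt; omega⟩} := by
  ext v
  simp only [paretoFront, Set.mem_ofPred_eq, paretoOptimal_iff]
  constructor
  · rintro ⟨x, hx, rfl⟩ j
    rw [mOJZJ_two_mul, mOJZJ_two_mul_add_one,
      blockFitness_of_isOptimalCount (ones_le _) (hx j)]
    have hoj := hx j
    have := ones_le (x j)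
    unfold IsOptimalCount at hoj
    omega
  · intro hv
    choose x hx using fun j : Fin (m / 2) =>
      exists_ones_eq (N := N) (o := v ⟨2 * j, by have := j.isLt; omega⟩ - k)
        (by have := (hv j).1; omega)
    have hopt : ∀ j, IsOptimalCount N k (ones (x j)) := fun j => by
      have := (hv j).1
      rw [hx, IsOptimalCount]
      omega
    refine ⟨x, hopt, funext_iff.2 (forall_fin_two_mul_iff.2 fun j => ?_)⟩
    rw [mOJZJ_two_mul, mOJZJ_two_mul_add_one,
      blockFitness_of_isOptimalCount (ones_le _) (hopt j), hx j]
    have := hv j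
    omega
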